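/- arXiv:0910.0535 — 2 statements merged into one kernel-verified Lean document; each statement's English description precedes it below -/
import Mathlib

section
/- Let S and K be semigroups with S a monoid with zero, and let λ ≥ 2. A homomorphism h : B⁰_λ(S) → K is trivial (i.e., constant) if and only if its restriction to the subsemigroup B⁰_λ(1) of matrix units, namely {(α,1_S,β) : α,β ∈ I_λ} ∪ {0}, is a trivial homomorphism. -/
attribute [local instance] Classical.propDecidable

/-- The Brandt `λ⁰`-extension of a semigroup `S` with zero, with index set `I`:
its elements are `0` (encoded `none`) and triples `(α, s, β)` with `s ≠ 0`. -/
def Brandt (I S : Type*) [Zero S] : Type _ := Option (I × {s : S // s ≠ 0} × I)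

instance brandtZero {I S : Type*} [Zero S] : Zero (Brandt I S) := ⟨none⟩

/-- Multiplication on the Brandt `λ⁰`-extension. -/
noncomputable def brandtMul {I S : Type*} [Zero S] [Mul S] :
    Brandt I S → Brandt I S → Brandt I S
  | some (α, a, β), some (γ, b, δ) =>
      if h : β = γ ∧ a.1 * b.1 ≠ 0 then some (α, ⟨a.1 * b.1, h.2⟩, δ) else none
  | _, _ => none

noncomputable instance brandtMulInst {I S : Type*} [Zero S] [Mul S] :
    Mul (Brandt I S) := ⟨brandtMul⟩

/-- The semigroup of `I × I`-matrix units. -/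
def MatrixUnits (I : Type*) := Option (I × I)

instance muZero {I : Type*} : Zero (MatrixUnits I) := ⟨none⟩

noncomputable instance muMul {I : Type*} : Mul (MatrixUnits I) :=
  ⟨fun x y => match x, y with
    | some (a, b), some (c, d) => if b = c then some (a, d) else none
    | _, _ => none⟩

/-- The subset of `Brandt I S` induced by a subset `T ⊆ S`
(the Brandt extension of `T` inside that of `S`). -/
def brandtSet {I S : Type*} [Zero S] (T : Set S) : Set (Brandt I S) :=
  {z | z = 0 ∨ ∃ (α β : I) (s : {s : S // s ≠ 0}), s.1 ∈ T ∧ z = some (α, s, β)}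

/-- The map `B⁰_{λ₁}(S) → B⁰_{λ₂}(T)` induced by `h : S → T`, an index map `φ`
and families `u`, `v` (`v` playing the role of `a ↦ u(a)⁻¹`):
`(α,s,β) ↦ (φ α, u α · h s · v β, φ β)` when the middle entry is nonzero, else `0`. -/
noncomputable def brandtHomMap {I₁ I₂ S T : Type*} [Zero S] [Zero T] [Mul T]
    (φ : I₁ → I₂) (u v : I₁ → T) (h : S → T) : Brandt I₁ S → Brandt I₂ T
  | some (a, s, b) =>
      if hh : u a * h s.1 * v b ≠ 0 then
        some (φ a, ⟨u a * h s.1 * v b, hh⟩, φ b) else none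
  | none => none

/-- The canonical copy of `S` in `Brandt I S` at index `α` (the set `S_{α,α}`). -/
noncomputable def brandtIncl {I S : Type*} [Zero S] (α : I) : S → Brandt I S :=
  fun s => if h : s = 0 then 0 else some (α, ⟨s, h⟩, α)

/-!
Every nonzero element `(γ, s, δ)` is fixed by the idempotent `(γ, 1, γ)` on the left and is
annihilated by `(γ', 1, γ')` for any `γ' ≠ γ`. If `h` sends both idempotents to `h 0`, then
`h (γ, s, δ) = h 0 * h (γ, s, δ) = h 0`.
-/

namespace Brandt

variable {I S : Type*}

def mk [Zero S] (α : I) (s : {s : S // s ≠ 0}) (β : I) : Brandt I S := some (α, s, β)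

theorem mk_mul_mk_of_ne [Zero S] [Mul S] {α β γ δ : I} (hβγ : β ≠ γ)
    (a b : {s : S // s ≠ 0}) : mk α a β * mk γ b δ = 0 := by
  show brandtMul (some _) (some _) = none
  exact dif_neg fun hh => hβγ hh.1

theorem mk_one_mul_mk [Zero S] [MulOneClass S] (h1 : (1 : S) ≠ 0) (γ δ : I)
    (s : {s : S // s ≠ 0}) : mk γ ⟨1, h1⟩ γ * mk γ s δ = mk γ s δ := by
  have hs : (1 : S) * s.1 ≠ 0 := by rw [one_mul]; exact s.2
  show brandtMul _ _ = _
  refine (dif_pos ⟨rfl, hs⟩).trans ?_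
  exact congrArg (fun t => some (γ, t, δ)) (Subtype.ext (one_mul s.1))

theorem map_mk_eq_map_zero {K : Type*} [Nontrivial I] [Zero S] [MulOneClass S] [Mul K]
    (h1 : (1 : S) ≠ 0) (h : Brandt I S → K) (hmul : ∀ x y, h (x * y) = h x * h y)
    (hidem : ∀ α : I, h (mk α ⟨1, h1⟩ α) = h 0) (γ δ : I) (s : {s : S // s ≠ 0}) :
    h (mk γ s δ) = h 0 := by
  obtain ⟨γ', hγ'⟩ := exists_ne γ
  calc h (mk γ s δ)
      = h (mk γ ⟨1, h1⟩ γ) * h (mk γ s δ) := by rw [← hmul, mk_one_mul_mk]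
    _ = h (mk γ' ⟨1, h1⟩ γ') * h (mk γ s δ) := by rw [hidem, hidem]
    _ = h 0 := by rw [← hmul, mk_mul_mk_of_ne hγ']

end Brandt

/-- For `λ ≥ 2`, a homomorphism `h : B⁰_λ(S) → K` is constant iff
its restriction to the matrix units `{(α,1,β)} ∪ {0}` is constant. -/
theorem brandt_trivial_iff_trivial_on_units {I S K : Type*} [MonoidWithZero S] [Mul K]
    [Nontrivial I] (h1 : (1 : S) ≠ 0)
    (h : Brandt I S → K) (hmul : ∀ x y, h (x * y) = h x * h y) :
    (∀ x y : Brandt I S, h x = h y) ↔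
      ((∀ α β γ δ : I,
          h (some (α, ⟨1, h1⟩, β)) = h (some (γ, ⟨1, h1⟩, δ))) ∧
        ∀ α β : I, h (some (α, ⟨1, h1⟩, β)) = h 0) := by
  refine ⟨fun hconst => ⟨fun _ _ _ _ => hconst _ _, fun _ _ => hconst _ _⟩, ?_⟩
  rintro ⟨-, hzero⟩
  have hall : ∀ z : Brandt I S, h z = h 0 := by
    rintro (_ | ⟨γ, s, δ⟩)
    · rfl
    · exact Brandt.map_mk_eq_map_zero h1 h hmul (fun α => hzero α α) γ δ s
  exact fun x y => (hall x).trans (hall y).symm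
end

section
/- Let λ ≥ 1 be a finite cardinal and let (B⁰_λ(S), τ_B) be a topological semigroup structure on B⁰_λ(S) extending a topology τ on S via some copy S_{α,α} (i.e., τ_B restricted to S_{α,α} equals τ). If A is a non-empty open subset of S not containing 0_S, then A_{β,γ} = {(β,s,γ) : s ∈ A} is open in (B⁰_λ(S), τ_B) for all β, γ ∈ I_λ; and if A is open containing 0_S, then ⋃_{β,γ∈I_λ} A_{β,γ} (where A_{β,γ} includes the zero 0) is open in (B⁰_λ(S), τ_B). -/
attribute [local instance] Classical.propDecidable

/-- The non-zero element `(α, s, β)` of `Brandt I S`. -/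
def brandtElt {I S : Type*} [Zero S] (α : I) (s : {s : S // s ≠ 0}) (β : I) :
    Brandt I S := some (α, s, β)
/-! The sandwich `z ↦ (α,1,β) · z · (γ,1,α)` is continuous and lands in the copy `S_{α,α}`,
where it reads off the `(β,γ)`-entry of `z` (or `0`). Since `S_{α,α}` carries the topology of
`S`, every entry map `B⁰_λ(S) → S` is continuous. The sets in question are preimages of `A`
under one entry map (when `0 ∉ A`), or the intersection of such preimages over the finitely
many pairs `(β,γ)` (when `0 ∈ A`). -/

namespace Brandt

variable {I S : Type*}

section Zero

variable [Zero S]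

lemma eq_zero_or_exists_eq_brandtElt (z : Brandt I S) :
    z = 0 ∨ ∃ (β : I) (s : {s : S // s ≠ 0}) (γ : I), z = brandtElt β s γ := by
  rcases z with _ | ⟨β, s, γ⟩
  · exact Or.inl rfl
  · exact Or.inr ⟨β, s, γ, rfl⟩

instance [Subsingleton S] : Subsingleton (Brandt I S) := by
  have h : ∀ z : Brandt I S, z = 0 := fun z =>
    (eq_zero_or_exists_eq_brandtElt z).resolve_right
      fun ⟨_, s, _, _⟩ => s.2 (Subsingleton.elim _ _)
  exact ⟨fun z w => (h z).trans (h w).symm⟩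

lemma brandtElt_ne_zero (β : I) (s : {s : S // s ≠ 0}) (γ : I) : brandtElt β s γ ≠ 0 :=
  Option.some_ne_none _

lemma brandtElt_inj {β β' γ γ' : I} {s s' : {s : S // s ≠ 0}} :
    brandtElt β s γ = brandtElt β' s' γ' ↔ β = β' ∧ s = s' ∧ γ = γ' :=
  Option.some_inj.trans (by simp only [Prod.mk.injEq])

lemma brandtIncl_zero (α : I) : brandtIncl α (0 : S) = 0 := by
  simp [brandtIncl]

lemma brandtIncl_coe (α : I) (s : {s : S // s ≠ 0}) : brandtIncl α s.1 = brandtElt α s α :=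
  dif_neg s.2

noncomputable def entry (β γ : I) : Brandt I S → S
  | some (b, s, c) => if b = β ∧ c = γ then s.1 else 0
  | none => 0

lemma entry_zero (β γ : I) : entry β γ (0 : Brandt I S) = 0 := rfl

lemma entry_brandtElt (β γ b c : I) (s : {s : S // s ≠ 0}) :
    entry β γ (brandtElt b s c) = if b = β ∧ c = γ then s.1 else 0 := rfl

lemma entry_brandtElt_self (β γ : I) (s : {s : S // s ≠ 0}) :
    entry β γ (brandtElt β s γ) = s.1 :=
  if_pos ⟨rfl, rfl⟩

lemma preimage_entry_of_zero_notMem {A : Set S} (hA : (0 : S) ∉ A) (β γ : I) :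
    entry β γ ⁻¹' A =
      {z : Brandt I S | ∃ s : {s : S // s ≠ 0}, s.1 ∈ A ∧ z = brandtElt β s γ} := by
  ext z
  refine ⟨fun hz => ?_, ?_⟩
  · rcases eq_zero_or_exists_eq_brandtElt z with rfl | ⟨b, s, c, rfl⟩
    · exact absurd hz hA
    · rw [Set.mem_preimage, entry_brandtElt] at hz
      split_ifs at hz with h
      · obtain ⟨rfl, rfl⟩ := h
        exact ⟨s, hz, rfl⟩
      · exact absurd hz hA
  · rintro ⟨s, hs, rfl⟩
    rwa [Set.mem_preimage, entry_brandtElt_self]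

lemma iInter_preimage_entry_of_zero_mem {A : Set S} (hA : (0 : S) ∈ A) :
    ⋂ (β : I) (γ : I), entry β γ ⁻¹' A = {z : Brandt I S |
      z = 0 ∨ ∃ (β γ : I) (s : {s : S // s ≠ 0}), s.1 ∈ A ∧ z = brandtElt β s γ} := by
  ext z
  simp only [Set.mem_iInter, Set.mem_preimage, Set.mem_ofPred]
  rcases eq_zero_or_exists_eq_brandtElt z with rfl | ⟨b, s, c, rfl⟩
  · exact ⟨fun _ => Or.inl rfl, fun _ _ _ => hA⟩
  · refine ⟨fun hz => Or.inr ⟨b, c, s, entry_brandtElt_self b c s ▸ hz b c, rfl⟩, ?_⟩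
    rintro (h | ⟨β, γ, t, ht, h⟩) β' γ'
    · exact absurd h (brandtElt_ne_zero b s c)
    · obtain ⟨rfl, rfl, rfl⟩ := brandtElt_inj.mp h
      rw [entry_brandtElt]
      split_ifs
      exacts [ht, hA]

end Zero

section Mul

variable [Zero S] [Mul S]

protected lemma zero_mul (z : Brandt I S) : 0 * z = 0 := rfl

protected lemma mul_zero (z : Brandt I S) : z * 0 = 0 := by
  rcases z with _ | ⟨β, s, γ⟩ <;> rfl

lemma brandtElt_mul_brandtElt (α β γ δ : I) (a b : {s : S // s ≠ 0}) :
    brandtElt α a β * brandtElt γ b δ =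
      if h : β = γ ∧ a.1 * b.1 ≠ 0 then brandtElt α ⟨a.1 * b.1, h.2⟩ δ else 0 :=
  rfl

end Mul

section Sandwich

variable [MulZeroOneClass S] [Nontrivial S]

def matrixUnit (β γ : I) : Brandt I S := brandtElt β ⟨1, one_ne_zero⟩ γ

lemma matrixUnit_mul_mul_matrixUnit (α β γ : I) (z : Brandt I S) :
    matrixUnit α β * z * matrixUnit γ α = brandtIncl α (entry β γ z) := by
  rcases eq_zero_or_exists_eq_brandtElt z with rfl | ⟨b, s, c, rfl⟩
  · rw [Brandt.mul_zero, Brandt.zero_mul, entry_zero, brandtIncl_zero]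
  · rw [entry_brandtElt, matrixUnit, matrixUnit, brandtElt_mul_brandtElt]
    by_cases hb : β = b
    · subst hb
      rw [dif_pos ⟨rfl, by simpa using s.2⟩, brandtElt_mul_brandtElt]
      by_cases hc : c = γ
      · subst hc
        rw [dif_pos ⟨rfl, by simpa using s.2⟩, if_pos ⟨rfl, rfl⟩, brandtIncl_coe]
        simp only [one_mul, mul_one]
      · rw [dif_neg (fun h => hc h.1), if_neg (fun h => hc h.2), brandtIncl_zero]
    · rw [dif_neg (fun h => hb h.1), if_neg (fun h => hb h.1.symm), brandtIncl_zero,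
        Brandt.zero_mul]

lemma continuous_entry [TopologicalSpace S] [TopologicalSpace (Brandt I S)]
    [ContinuousMul (Brandt I S)] {α : I} (hα : Topology.IsInducing (brandtIncl (S := S) α))
    (β γ : I) : Continuous (entry (S := S) β γ) := by
  rw [hα.continuous_iff]
  have : Continuous fun z : Brandt I S => matrixUnit α β * z * matrixUnit γ α := by fun_prop
  simpa only [Function.comp_def, matrixUnit_mul_mul_matrixUnit] using this

end Sandwich

end Brandt

open Brandt in
theorem brandt_open_sets_general {I S : Type*} [MonoidWithZero S]
    [TopologicalSpace S] [Finite I]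
    [TopologicalSpace (Brandt I S)] [ContinuousMul (Brandt I S)]
    (α : I) (hemb : Topology.IsEmbedding (brandtIncl (I := I) (S := S) α)) :
    (∀ A : Set S, IsOpen A → (0 : S) ∉ A → ∀ β γ : I,
      IsOpen {z : Brandt I S | ∃ s : {s : S // s ≠ 0}, s.1 ∈ A ∧ z = brandtElt β s γ}) ∧
    (∀ A : Set S, IsOpen A → (0 : S) ∈ A →
      IsOpen {z : Brandt I S |
        z = 0 ∨ ∃ (β γ : I) (s : {s : S // s ≠ 0}), s.1 ∈ A ∧ z = brandtElt β s γ}) := by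
  rcases subsingleton_or_nontrivial S with _ | _
  · have hopen (U : Set (Brandt I S)) : IsOpen U := Subsingleton.set_cases isOpen_empty isOpen_univ U
    exact ⟨fun _ _ _ _ _ => hopen _, fun _ _ _ => hopen _⟩
  have hentry := continuous_entry hemb.isInducing
  refine ⟨fun A hA hA0 β γ => ?_, fun A hA hA0 => ?_⟩
  · rw [← preimage_entry_of_zero_notMem hA0]
    exact hA.preimage (hentry β γ)
  · rw [← iInter_preimage_entry_of_zero_mem hA0]
    exact isOpen_iInter_of_finite fun β => isOpen_iInter_of_finite fun γ =>
      hA.preimage (hentry β γ)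

/-- For a finite cardinal `λ ≥ 1` and a topological-semigroup topology
on `B⁰_λ(S)` restricting to the topology of `S` on some copy `S_{α,α}`: open sets
`A ⊆ S` avoiding `0` yield open sets `A_{β,γ}`, and open sets containing `0` yield
open sets `⋃_{β,γ} A_{β,γ}` (including the zero). -/
theorem brandt_open_sets {I S : Type*} [MonoidWithZero S]
    [TopologicalSpace S] [ContinuousMul S] [Finite I] [Nonempty I]
    [TopologicalSpace (Brandt I S)] [ContinuousMul (Brandt I S)]
    (α : I) (hemb : Topology.IsEmbedding (brandtIncl (I := I) (S := S) α)) :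
    (∀ A : Set S, IsOpen A → (0 : S) ∉ A → ∀ β γ : I,
      IsOpen {z : Brandt I S | ∃ s : {s : S // s ≠ 0}, s.1 ∈ A ∧ z = brandtElt β s γ}) ∧
    (∀ A : Set S, IsOpen A → (0 : S) ∈ A →
      IsOpen {z : Brandt I S |
        z = 0 ∨ ∃ (β γ : I) (s : {s : S // s ≠ 0}), s.1 ∈ A ∧ z = brandtElt β s γ}) :=
  brandt_open_sets_general α hemb
end
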